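/- arXiv:2407.16708 — 6 statements merged into one kernel-verified Lean document; each statement's English description precedes it below -/
import Mathlib

section
/- For every real 3-by-3 matrix A there exists a real special orthogonal matrix Q such that B = Q A Qᵀ satisfies: B₂₀ = 0, B₂₁ = 0, B₀₀ = B₁₁, B₀₁ − B₁₀ ≥ 0, B₀₁ + B₁₀ ≥ 0, and B₁₂ ≥ 0 (0-based indices). That is, every real 3-by-3 matrix can be brought by rotation to the special block form with entries B = [[χ, (γ+ω₃)/2, −β], [(γ−ω₃)/2, χ, α], [0, 0, λ_r]] with ω₃ ≥ 0, γ ≥ 0, α ≥ 0. -/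
open Polynomial in
lemma aux_cubic_root (p : Polynomial ℝ) (hm : p.Monic) (hd : p.natDegree = 3) :
    ∃ x : ℝ, p.eval x = 0 := by
  have hpz : p ≠ 0 := hm.ne_zero
  have hdeg : 0 < p.degree := natDegree_pos_iff_degree_pos.mp (by omega)
  have htop : Filter.Tendsto (fun x => p.eval x) Filter.atTop Filter.atTop :=
    p.tendsto_atTop_of_leadingCoeff_nonneg hdeg (by simp [hm.leadingCoeff])
  set q : Polynomial ℝ := p.comp (-X) with hq
  have hqd : q.natDegree = 3 := by
    rw [hq, natDegree_comp]; simp [hd]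
  have hqlc : q.leadingCoeff = -1 := by
    rw [hq, leadingCoeff_comp (by simp)]
    simp [hm.leadingCoeff, hd]; norm_num
  have hqdeg : 0 < q.degree := natDegree_pos_iff_degree_pos.mp (by omega)
  have hbot : Filter.Tendsto (fun x => q.eval x) Filter.atTop Filter.atBot :=
    q.tendsto_atBot_of_leadingCoeff_nonpos hqdeg (by rw [hqlc]; norm_num)
  obtain ⟨b, hb⟩ := (htop.eventually_ge_atTop 0).exists
  obtain ⟨a', ha'⟩ := (hbot.eventually_le_atBot 0).exists
  have ha : p.eval (-a') ≤ 0 := by simpa [hq] using ha'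
  have hcont : ContinuousOn (fun x => p.eval x) (Set.uIcc (-a') b) :=
    (Polynomial.continuous p).continuousOn
  have h0 : (0:ℝ) ∈ Set.uIcc (p.eval (-a')) (p.eval b) := Set.mem_uIcc.mpr (Or.inl ⟨ha, hb⟩)
  obtain ⟨x, _, hx⟩ := intermediate_value_uIcc hcont h0
  exact ⟨x, hx⟩

lemma aux_rot (d g : ℝ) :
    ∃ c s : ℝ, c^2 + s^2 = 1 ∧ (c^2 - s^2) * d = 2*c*s * g ∧
      0 ≤ 2*c*s * d + (c^2 - s^2) * g := by
  by_cases hz : ((g:ℂ) + d * Complex.I) = 0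
  · have hg : g = 0 := by
      have := congrArg Complex.re hz; simpa using this
    have hd : d = 0 := by
      have := congrArg Complex.im hz; simpa using this
    exact ⟨1, 0, by norm_num, by simp [hd], by simp [hg, hd]⟩
  · set z : ℂ := (g:ℂ) + d * Complex.I with hzdef
    have hre : z.re = g := by simp [hzdef]
    have him : z.im = d := by simp [hzdef]
    have habs : 0 < ‖z‖ := norm_pos_iff.mpr hz
    refine ⟨Real.cos (z.arg / 2), Real.sin (z.arg / 2), ?_, ?_, ?_⟩
    · rw [add_comm]; exact Real.sin_sq_add_cos_sq _
    · have h1 : Real.cos (z.arg/2)^2 - Real.sin (z.arg/2)^2 = Real.cos z.arg := by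
        have hc := Real.cos_two_mul (z.arg/2)
        rw [show 2*(z.arg/2) = z.arg by ring] at hc
        nlinarith [hc, Real.sin_sq_add_cos_sq (z.arg/2)]
      have h2 : 2 * Real.cos (z.arg/2) * Real.sin (z.arg/2) = Real.sin z.arg := by
        have hc := Real.sin_two_mul (z.arg/2)
        rw [show 2*(z.arg/2) = z.arg by ring] at hc
        rw [hc]; ring
      rw [h1, h2, Complex.cos_arg hz, Complex.sin_arg, hre, him]
      field_simp
    · have h1 : Real.cos (z.arg/2)^2 - Real.sin (z.arg/2)^2 = Real.cos z.arg := by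
        have hc := Real.cos_two_mul (z.arg/2)
        rw [show 2*(z.arg/2) = z.arg by ring] at hc
        nlinarith [hc, Real.sin_sq_add_cos_sq (z.arg/2)]
      have h2 : 2 * Real.cos (z.arg/2) * Real.sin (z.arg/2) = Real.sin z.arg := by
        have hc := Real.sin_two_mul (z.arg/2)
        rw [show 2*(z.arg/2) = z.arg by ring] at hc
        rw [hc]; ring
      rw [h1, h2, Complex.cos_arg hz, Complex.sin_arg, hre, him]
      have : d / ‖z‖ * d + g / ‖z‖ * g = (d^2 + g^2) / ‖z‖ := by
        field_simp
      rw [this]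
      positivity

open Matrix in
lemma aux_eig (M : Matrix (Fin 3) (Fin 3) ℝ) :
    ∃ (μ : ℝ) (v : Fin 3 → ℝ), v ≠ 0 ∧ M.mulVec v = μ • v := by
  obtain ⟨μ, hμ⟩ := aux_cubic_root M.charpoly M.charpoly_monic
    (by rw [M.charpoly_natDegree_eq_dim]; simp)
  have hmap : (charmatrix M).map (Polynomial.evalRingHom μ) = μ • 1 - M := by
    ext i j
    by_cases h : i = j
    · subst h
      simp [charmatrix_apply_eq, Matrix.smul_apply, Matrix.one_apply]
    · simp [charmatrix_apply_ne _ _ _ h, Matrix.smul_apply, Matrix.one_apply, h]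
  have hdet : (μ • (1 : Matrix (Fin 3) (Fin 3) ℝ) - M).det = 0 := by
    rw [← hmap, ← RingHom.mapMatrix_apply, ← RingHom.map_det]
    simpa [Matrix.charpoly] using hμ
  obtain ⟨v, hv, hmul⟩ := (Matrix.exists_mulVec_eq_zero_iff.mpr hdet)
  refine ⟨μ, v, hv, ?_⟩
  have := hmul
  rw [Matrix.sub_mulVec, sub_eq_zero, Matrix.smul_mulVec, Matrix.one_mulVec] at this
  exact this.symm

open Matrix in
lemma aux_Q1 (A : Matrix (Fin 3) (Fin 3) ℝ) :
    ∃ Q : Matrix (Fin 3) (Fin 3) ℝ, Q * Qᵀ = 1 ∧ Qᵀ * Q = 1 ∧ Q.det = 1 ∧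
      (Q * A * Qᵀ) 2 0 = 0 ∧ (Q * A * Qᵀ) 2 1 = 0 := by
  obtain ⟨μ, v, hv, heq⟩ := aux_eig Aᵀ
  set v' : EuclideanSpace ℝ (Fin 3) := (WithLp.equiv 2 (Fin 3 → ℝ)).symm v with hv'def
  have hv' : v' ≠ 0 := by
    simpa [hv'def] using hv
  set t : ℝ := ‖v'‖⁻¹ with ht
  set u : EuclideanSpace ℝ (Fin 3) := t • v' with hudef
  have hu : ‖u‖ = 1 := norm_smul_inv_norm hv'
  have hul : ∀ l, u l = t * v l := by
    intro l; simp [hudef, hv'def]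
  have hdim : Module.finrank ℝ (EuclideanSpace ℝ (Fin 3)) = Fintype.card (Fin 3) := by simp
  have horth : Orthonormal ℝ (Set.restrict {(2 : Fin 3)} (fun _ => u)) := by
    constructor
    · intro i; exact hu
    · intro i j hij
      exact absurd (Subtype.ext (by
        have hi := i.2; have hj := j.2
        simp only [Set.mem_singleton_iff] at hi hj
        rw [hi, hj])) hij
  obtain ⟨b, hb⟩ := horth.exists_orthonormalBasis_extension_of_card_eq hdim
  have hb2 : b 2 = u := hb 2 rfl
  set Q0 : Matrix (Fin 3) (Fin 3) ℝ := fun i l => b i l with hQ0def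
  have hQ0 : Q0 * Q0ᵀ = 1 := by
    ext i j
    have h := orthonormal_iff_ite.mp b.orthonormal i j
    simp only [PiLp.inner_apply, RCLike.inner_apply, starRingEnd_apply, star_trivial] at h
    rw [Matrix.mul_apply, Matrix.one_apply, ← h]
    exact Finset.sum_congr rfl (fun x _ => mul_comm _ _)
  set e : ℝ := Q0.det with he_def
  have he : e * e = 1 := by
    have := congrArg Matrix.det hQ0
    rwa [Matrix.det_mul, Matrix.det_transpose, Matrix.det_one] at this
  set D : Matrix (Fin 3) (Fin 3) ℝ := Matrix.diagonal ![e, 1, 1] with hDdef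
  set Q : Matrix (Fin 3) (Fin 3) ℝ := D * Q0 with hQdef
  have hQQ : Q * Qᵀ = 1 := by
    have h1 : Q * Qᵀ = D * (Q0 * Q0ᵀ) * Dᵀ := by
      rw [hQdef, Matrix.transpose_mul]
      noncomm_ring
    rw [h1, hQ0, Matrix.mul_one]
    ext i j
    fin_cases i <;> fin_cases j <;>
      simp [hDdef, Matrix.mul_apply, Fin.sum_univ_three, Matrix.diagonal, Matrix.one_apply, he]
  have hQtQ : Qᵀ * Q = 1 := mul_eq_one_comm.mp hQQ
  have hdet : Q.det = 1 := by
    rw [hQdef, Matrix.det_mul, hDdef, Matrix.det_diagonal]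
    simp [Fin.prod_univ_three, ← he_def, he]
  have hrow2 : ∀ l, Q 2 l = t * v l := by
    intro l
    rw [hQdef, hDdef, Matrix.diagonal_mul]
    simp [hQ0def, hb2, hul]
  have hrow : ∀ l, ∑ k, A k l * Q 2 k = μ * Q 2 l := by
    intro l
    have h := congrFun heq l
    simp only [Matrix.mulVec, dotProduct, Matrix.transpose_apply, Pi.smul_apply,
      smul_eq_mul] at h
    calc ∑ k, A k l * Q 2 k = t * ∑ k, A k l * v k := by
          simp only [hrow2]; rw [Finset.mul_sum]; congr 1; ext k; ring
      _ = t * (μ * v l) := by rw [h]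
      _ = μ * Q 2 l := by rw [hrow2]; ring
  have horr : ∀ j, j ≠ 2 → ∑ l, Q j l * Q 2 l = 0 := by
    intro j hj
    have h := congrFun (congrFun hQQ j) 2
    simpa [Matrix.mul_apply, Matrix.one_apply, hj] using h
  refine ⟨Q, hQQ, hQtQ, hdet, ?_, ?_⟩
  · have h0 := hrow 0; have h1 := hrow 1; have h2 := hrow 2
    have ho := horr 0 (by decide)
    simp only [Fin.sum_univ_three] at h0 h1 h2 ho ⊢
    simp only [Matrix.mul_apply, Matrix.transpose_apply, Fin.sum_univ_three]
    linear_combination Q 0 0 * h0 + Q 0 1 * h1 + Q 0 2 * h2 + μ * ho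
  · have h0 := hrow 0; have h1 := hrow 1; have h2 := hrow 2
    have ho := horr 1 (by decide)
    simp only [Fin.sum_univ_three] at h0 h1 h2 ho ⊢
    simp only [Matrix.mul_apply, Matrix.transpose_apply, Fin.sum_univ_three]
    linear_combination Q 1 0 * h0 + Q 1 1 * h1 + Q 1 2 * h2 + μ * ho

open Matrix in
/-- Special real Schur form: every real `3 × 3` matrix can be brought by a rotation to
the block upper triangular form with equal diagonal entries in the `2 × 2` block and
the sign normalizations `ω₃ ≥ 0`, `γ ≥ 0`, `α ≥ 0`. -/
theorem special_real_schur_form_exists (A : Matrix (Fin 3) (Fin 3) ℝ) :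
    ∃ Q : Matrix (Fin 3) (Fin 3) ℝ,
      Q * Qᵀ = 1 ∧ Qᵀ * Q = 1 ∧ Q.det = 1 ∧
      (Q * A * Qᵀ) 2 0 = 0 ∧ (Q * A * Qᵀ) 2 1 = 0 ∧
      (Q * A * Qᵀ) 0 0 = (Q * A * Qᵀ) 1 1 ∧
      0 ≤ (Q * A * Qᵀ) 0 1 - (Q * A * Qᵀ) 1 0 ∧
      0 ≤ (Q * A * Qᵀ) 0 1 + (Q * A * Qᵀ) 1 0 ∧
      0 ≤ (Q * A * Qᵀ) 1 2 := by
  obtain ⟨Q1, hQ1, hQ1t, hQ1det, hb20, hb21⟩ := aux_Q1 A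
  set B : Matrix (Fin 3) (Fin 3) ℝ := Q1 * A * Q1ᵀ with hBdef
  set p : ℝ := if 0 ≤ B 0 1 - B 1 0 then 1 else -1 with hpdef
  have hp : p * p = 1 := by rw [hpdef]; split_ifs <;> norm_num
  have hpω : 0 ≤ p * (B 0 1 - B 1 0) := by
    rw [hpdef]; split_ifs with h
    · simpa using h
    · push_neg at h; nlinarith
  obtain ⟨c, s, hcs, hrot1, hrot2⟩ := aux_rot (B 0 0 - B 1 1) (p * (B 0 1 + B 1 0))
  set q : ℝ := if 0 ≤ s * (p * B 0 2) + c * B 1 2 then 1 else -1 with hqdef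
  have hq : q * q = 1 := by rw [hqdef]; split_ifs <;> norm_num
  have hqα : 0 ≤ q * (s * (p * B 0 2) + c * B 1 2) := by
    rw [hqdef]; split_ifs with h
    · simpa using h
    · push_neg at h; nlinarith
  set R : Matrix (Fin 3) (Fin 3) ℝ :=
    !![q*c, -(q*s*p), 0; q*s, q*c*p, 0; 0, 0, p] with hRdef
  have hRT : Rᵀ = !![q*c, q*s, 0; -(q*s*p), q*c*p, 0; 0, 0, p] := by
    rw [hRdef]; ext i j; fin_cases i <;> fin_cases j <;> rfl
  have hBeta : B = !![B 0 0, B 0 1, B 0 2; B 1 0, B 1 1, B 1 2; B 2 0, B 2 1, B 2 2] :=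
    Matrix.eta_fin_three B
  have hRR : R * Rᵀ = 1 := by
    rw [hRdef, hRT, Matrix.mul_fin_three, Matrix.one_fin_three]
    ext i j
    fin_cases i <;> fin_cases j <;>
      simp [Matrix.vecHead, Matrix.vecTail, Function.comp]
    · linear_combination (q*q)*hcs + hq + (q*q*s*s)*hp
    · linear_combination (-(q*q*c*s))*hp
    · linear_combination (-(q*q*s*c))*hp
    · linear_combination (q*q)*hcs + hq + (q*q*c*c)*hp
    · linear_combination hp
  have hRt : Rᵀ * R = 1 := mul_eq_one_comm.mp hRR
  have hRdet : R.det = 1 := by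
    rw [hRdef, Matrix.det_fin_three]
    simp
    linear_combination (q*q*p*p)*hcs + (q*q)*hp + hq
  have hN : R * Q1 * A * (R * Q1)ᵀ = R * B * Rᵀ := by
    rw [Matrix.transpose_mul, hBdef]
    simp [Matrix.mul_assoc]
  refine ⟨R * Q1, ?_, ?_, ?_, ?_, ?_, ?_, ?_, ?_, ?_⟩
  · rw [Matrix.transpose_mul, show R * Q1 * (Q1ᵀ * Rᵀ) = R * (Q1 * Q1ᵀ) * Rᵀ by
      simp [Matrix.mul_assoc], hQ1, Matrix.mul_one, hRR]
  · rw [Matrix.transpose_mul, show Q1ᵀ * Rᵀ * (R * Q1) = Q1ᵀ * (Rᵀ * R) * Q1 by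
      simp [Matrix.mul_assoc], hRt, Matrix.mul_one, hQ1t]
  · rw [Matrix.det_mul, hRdet, hQ1det, mul_one]
  · rw [hN]
    rw [hBeta, hRdef, hRT, Matrix.mul_fin_three, Matrix.mul_fin_three]
    simp only [Matrix.cons_val', Matrix.cons_val_zero, Matrix.cons_val_one, Matrix.head_cons,
      Matrix.empty_val', Matrix.cons_val_fin_one, Matrix.cons_val_two, Matrix.tail_cons,
      Matrix.head_fin_const, Matrix.of_apply]
    linear_combination (p*q*c)*hb20 + (-(p*q*s*p))*hb21
  · rw [hN]
    rw [hBeta, hRdef, hRT, Matrix.mul_fin_three, Matrix.mul_fin_three]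
    simp only [Matrix.cons_val', Matrix.cons_val_zero, Matrix.cons_val_one, Matrix.head_cons,
      Matrix.empty_val', Matrix.cons_val_fin_one, Matrix.cons_val_two, Matrix.tail_cons,
      Matrix.head_fin_const, Matrix.of_apply]
    linear_combination (p*q*s)*hb20 + (p*q*c*p)*hb21
  · rw [hN]
    rw [hBeta, hRdef, hRT, Matrix.mul_fin_three, Matrix.mul_fin_three]
    simp only [Matrix.cons_val', Matrix.cons_val_zero, Matrix.cons_val_one, Matrix.head_cons,
      Matrix.empty_val', Matrix.cons_val_fin_one, Matrix.cons_val_two, Matrix.tail_cons,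
      Matrix.head_fin_const, Matrix.of_apply]
    linear_combination (q*q)*hrot1 + (-(q*q)*(c^2-s^2)*(B 1 1))*hp
  · rw [hN]
    have key : (R * B * Rᵀ) 0 1 - (R * B * Rᵀ) 1 0 = p * (B 0 1 - B 1 0) := by
      rw [hBeta, hRdef, hRT, Matrix.mul_fin_three, Matrix.mul_fin_three]
      simp only [Matrix.cons_val', Matrix.cons_val_zero, Matrix.cons_val_one, Matrix.head_cons,
        Matrix.empty_val', Matrix.cons_val_fin_one, Matrix.cons_val_two, Matrix.tail_cons,
        Matrix.head_fin_const, Matrix.of_apply]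
      linear_combination ((p*(B 0 1 - B 1 0))*(q*q))*hcs + (p*(B 0 1 - B 1 0))*hq
    rw [key]; exact hpω
  · rw [hN]
    have key : (R * B * Rᵀ) 0 1 + (R * B * Rᵀ) 1 0 =
        2*c*s * (B 0 0 - B 1 1) + (c^2 - s^2) * (p*(B 0 1 + B 1 0)) := by
      rw [hBeta, hRdef, hRT, Matrix.mul_fin_three, Matrix.mul_fin_three]
      simp only [Matrix.cons_val', Matrix.cons_val_zero, Matrix.cons_val_one, Matrix.head_cons,
        Matrix.empty_val', Matrix.cons_val_fin_one, Matrix.cons_val_two, Matrix.tail_cons,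
        Matrix.head_fin_const, Matrix.of_apply]
      linear_combination (2*c*s * (B 0 0 - B 1 1) + (c^2 - s^2) * (p*(B 0 1 + B 1 0)))*hq +
        (-(q*q)*2*c*s*(B 1 1))*hp
    rw [key]; exact hrot2
  · rw [hN]
    have key : (R * B * Rᵀ) 1 2 = q * (s * (p * B 0 2) + c * B 1 2) := by
      rw [hBeta, hRdef, hRT, Matrix.mul_fin_three, Matrix.mul_fin_three]
      simp only [Matrix.cons_val', Matrix.cons_val_zero, Matrix.cons_val_one, Matrix.head_cons,
        Matrix.empty_val', Matrix.cons_val_fin_one, Matrix.cons_val_two, Matrix.tail_cons,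
        Matrix.head_fin_const, Matrix.of_apply]
      linear_combination (q*c*(B 1 2))*hp
    rw [key]; exact hqα
end

section
/- Let A be a real 3-by-3 matrix whose characteristic polynomial has a non-real root. Suppose Q and Q' are real special orthogonal matrices such that both B = Q A Qᵀ and B' = Q' A Q'ᵀ satisfy: B₂₀ = B₂₁ = 0, B₀₀ = B₁₁, B₀₁ − B₁₀ > 0, B₀₁ + B₁₀ > 0, and B₁₂ > 0 (and the same strict conditions for B'). Then B = B'. In other words, the special real Schur form with the sign normalization ω₃ > 0, γ > 0, α > 0 is unique. -/
open Matrix Polynomial in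
/-- Uniqueness of the special real Schur form: for a real `3 × 3` matrix with a non-real
eigenvalue, the block upper triangular form with equal diagonal entries in the `2 × 2`
block and the strict sign normalizations `ω₃ > 0`, `γ > 0`, `α > 0` is unique. -/
theorem special_real_schur_form_unique
    (A Q Q' : Matrix (Fin 3) (Fin 3) ℝ)
    (hA : ∃ z : ℂ, z.im ≠ 0 ∧ (A.charpoly.map (algebraMap ℝ ℂ)).IsRoot z)
    (hQ1 : Q * Qᵀ = 1) (hQ2 : Qᵀ * Q = 1) (hQ3 : Q.det = 1)
    (hQ'1 : Q' * Q'ᵀ = 1) (hQ'2 : Q'ᵀ * Q' = 1) (hQ'3 : Q'.det = 1)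
    (hB1 : (Q * A * Qᵀ) 2 0 = 0) (hB2 : (Q * A * Qᵀ) 2 1 = 0)
    (hB3 : (Q * A * Qᵀ) 0 0 = (Q * A * Qᵀ) 1 1)
    (hB4 : 0 < (Q * A * Qᵀ) 0 1 - (Q * A * Qᵀ) 1 0)
    (hB5 : 0 < (Q * A * Qᵀ) 0 1 + (Q * A * Qᵀ) 1 0)
    (hB6 : 0 < (Q * A * Qᵀ) 1 2)
    (hB'1 : (Q' * A * Q'ᵀ) 2 0 = 0) (hB'2 : (Q' * A * Q'ᵀ) 2 1 = 0)
    (hB'3 : (Q' * A * Q'ᵀ) 0 0 = (Q' * A * Q'ᵀ) 1 1)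
    (hB'4 : 0 < (Q' * A * Q'ᵀ) 0 1 - (Q' * A * Q'ᵀ) 1 0)
    (hB'5 : 0 < (Q' * A * Q'ᵀ) 0 1 + (Q' * A * Q'ᵀ) 1 0)
    (hB'6 : 0 < (Q' * A * Q'ᵀ) 1 2) :
    Q * A * Qᵀ = Q' * A * Q'ᵀ := by
  obtain ⟨z, hzim, hzroot⟩ := hA
  set B := Q * A * Qᵀ with hBdef
  set B' := Q' * A * Q'ᵀ with hB'def
  -- Part 1: the complex eigenvalue forces `B 0 1 * B 1 0 < 0`.
  have hbc : B 0 1 * B 1 0 < 0 := by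
    set f := algebraMap ℝ ℂ with hf
    have hmap : ∀ M N : Matrix (Fin 3) (Fin 3) ℝ, (M * N).map f = M.map f * N.map f := by
      intro M N; exact Matrix.map_mul
    have hQf : (Q.map f) * (Qᵀ.map f) = 1 := by
      rw [← hmap, hQ1, Matrix.map_one f (map_zero f) (map_one f)]
    have hA0 : Polynomial.eval z (A.map f).charpoly = 0 := by
      rw [Matrix.charpoly_map]; exact hzroot
    rw [Matrix.charpoly, ← Polynomial.coe_evalRingHom, RingHom.map_det] at hA0
    have hA0' : (z • (1 : Matrix (Fin 3) (Fin 3) ℂ) - A.map f).det = 0 := by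
      rw [← hA0]
      congr 1
      ext i j
      by_cases h : i = j
      · subst h; simp [charmatrix_apply_eq, Matrix.one_apply]
      · simp [charmatrix_apply_ne _ _ _ h, Matrix.one_apply, h]
    have key : z • (1 : Matrix (Fin 3) (Fin 3) ℂ) - B.map f
        = (Q.map f) * (z • 1 - A.map f) * (Qᵀ.map f) := by
      rw [hBdef, hmap, hmap, Matrix.mul_sub, Matrix.sub_mul]
      rw [Matrix.mul_smul, Matrix.smul_mul, Matrix.mul_one, hQf, Matrix.mul_assoc]
    have hdet0 : (z • (1 : Matrix (Fin 3) (Fin 3) ℂ) - B.map f).det = 0 := by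
      rw [key, Matrix.det_mul, Matrix.det_mul, hA0', mul_zero, zero_mul]
    rw [Matrix.det_fin_three] at hdet0
    simp only [Matrix.sub_apply, Matrix.smul_apply, Matrix.one_apply, Matrix.map_apply,
      smul_eq_mul, hf, Complex.coe_algebraMap, hB1, hB2, Complex.ofReal_zero,
      if_true, if_false, Fin.reduceEq, mul_one, mul_zero, sub_zero, zero_sub] at hdet0
    have hfac : (z - (B 2 2 : ℂ)) * ((z - (B 0 0 : ℂ))^2 - (B 0 1 : ℂ) * (B 1 0 : ℂ)) = 0 := by
      have hB3C : ((B 0 0 : ℝ) : ℂ) = ((B 1 1 : ℝ) : ℂ) :=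
        congrArg (fun x : ℝ => (x : ℂ)) hB3
      linear_combination hdet0 - (z - (B 2 2 : ℂ)) * (z - (B 0 0 : ℂ)) * hB3C
    have hzne : (z - (B 2 2 : ℂ)) ≠ 0 := by
      intro h
      apply hzim
      have := congrArg Complex.im h
      simpa using this
    have hsq : (z - (B 0 0 : ℂ))^2 = (B 0 1 : ℂ) * (B 1 0 : ℂ) := by
      rcases mul_eq_zero.mp hfac with h | h
      · exact absurd h hzne
      · exact sub_eq_zero.mp h
    rw [sq] at hsq
    have hre := congrArg Complex.re hsq
    have him := congrArg Complex.im hsq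
    simp only [Complex.mul_re, Complex.mul_im, Complex.sub_re, Complex.sub_im,
      Complex.ofReal_re, Complex.ofReal_im, sub_zero] at hre him
    have hzre : z.re - B 0 0 = 0 := by
      have h2 : (z.re - B 0 0) * z.im = 0 := by linarith
      rcases mul_eq_zero.mp h2 with h | h
      · exact h
      · exact absurd h hzim
    nlinarith [mul_self_pos.mpr hzim, hre, hzre]
  -- Part 2: setting up the orthogonal change of basis `P`.
  set P := Q' * Qᵀ with hPdef
  have hPPT : P * Pᵀ = 1 := by
    rw [hPdef, Matrix.transpose_mul, Matrix.transpose_transpose, Matrix.mul_assoc,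
      ← Matrix.mul_assoc Qᵀ, hQ2, Matrix.one_mul, hQ'1]
  have hPTP : Pᵀ * P = 1 := by
    rw [hPdef, Matrix.transpose_mul, Matrix.transpose_transpose, Matrix.mul_assoc,
      ← Matrix.mul_assoc Q'ᵀ, hQ'2, Matrix.one_mul, hQ1]
  have hB'P : B' = P * B * Pᵀ := by
    rw [hPdef, hBdef, hB'def, Matrix.transpose_mul, Matrix.transpose_transpose]
    simp only [← Matrix.mul_assoc]
    rw [Matrix.mul_assoc Q' Qᵀ Q, hQ2, Matrix.mul_one]
    rw [Matrix.mul_assoc (Q' * A) Qᵀ Q, hQ2, Matrix.mul_one]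
  have hdetP : P.det = 1 := by
    rw [hPdef, Matrix.det_mul, Matrix.det_transpose, hQ3, hQ'3, mul_one]
  have hcom : B' * P = P * B := by
    rw [hB'P, Matrix.mul_assoc (P * B) Pᵀ P, hPTP, Matrix.mul_one]
  -- Part 3: the last row of P is (0, 0, ε).
  have e20 := congrFun (congrFun hcom 2) 0
  have e21 := congrFun (congrFun hcom 2) 1
  simp only [Matrix.mul_apply, Fin.sum_univ_three, hB1, hB2, hB'1, hB'2,
    zero_mul, mul_zero, add_zero, zero_add] at e20 e21
  rw [← hB3] at e21
  have hu0 : P 2 0 = 0 := by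
    have h : P 2 0 * ((B' 2 2 - B 0 0)^2 - B 0 1 * B 1 0) = 0 := by
      linear_combination (B' 2 2 - B 0 0) * e20 + B 1 0 * e21
    rcases mul_eq_zero.mp h with h' | h'
    · exact h'
    · exfalso; linarith [sq_nonneg (B' 2 2 - B 0 0), hbc, h']
  have hu1 : P 2 1 = 0 := by
    have h : P 2 1 * ((B' 2 2 - B 0 0)^2 - B 0 1 * B 1 0) = 0 := by
      linear_combination (B' 2 2 - B 0 0) * e21 + B 0 1 * e20
    rcases mul_eq_zero.mp h with h' | h'
    · exact h'
    · exfalso; linarith [sq_nonneg (B' 2 2 - B 0 0), hbc, h']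
  -- Part 4: the last column of P is (0, 0, ε) as well.
  have n22 := congrFun (congrFun hPPT 2) 2
  have n22' := congrFun (congrFun hPTP 2) 2
  simp only [Matrix.mul_apply, Matrix.transpose_apply, Fin.sum_univ_three, Matrix.one_apply,
    hu0, hu1, zero_mul, mul_zero, add_zero, zero_add, if_true, reduceIte] at n22 n22'
  have h02 : P 0 2 = 0 := by
    have : P 0 2 * P 0 2 = 0 := by
      linarith [n22, n22', mul_self_nonneg (P 0 2), mul_self_nonneg (P 1 2)]
    exact mul_self_eq_zero.mp this
  have h12 : P 1 2 = 0 := by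
    have : P 1 2 * P 1 2 = 0 := by
      linarith [n22, n22', mul_self_nonneg (P 0 2), mul_self_nonneg (P 1 2)]
    exact mul_self_eq_zero.mp this
  -- Part 5: the remaining 2x2 block of P.
  have n00 := congrFun (congrFun hPPT 0) 0
  have n01 := congrFun (congrFun hPPT 0) 1
  have E00 := congrFun (congrFun hB'P 0) 0
  have E01 := congrFun (congrFun hB'P 0) 1
  have E10 := congrFun (congrFun hB'P 1) 0
  have E11 := congrFun (congrFun hB'P 1) 1
  have E12 := congrFun (congrFun hB'P 1) 2
  simp only [Matrix.mul_apply, Matrix.transpose_apply, Fin.sum_univ_three, Matrix.one_apply,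
    hu0, hu1, h02, h12, hB1, hB2, zero_mul, mul_zero, add_zero, zero_add,
    if_true, reduceIte, Fin.reduceEq, if_false] at n00 n01 E00 E01 E10 E11 E12
  rw [← hB3] at E00 E01 E10 E11
  rw [Matrix.det_fin_three] at hdetP
  rw [hu0, hu1, h02, h12] at hdetP
  ring_nf at hdetP
  have hd2 : P 0 0 * P 1 1 - P 0 1 * P 1 0 = P 2 2 := by
    linear_combination P 2 2 * hdetP - (P 0 0 * P 1 1 - P 0 1 * P 1 0) * n22
  have hr : P 1 0 = -P 2 2 * P 0 1 := by
    linear_combination P 0 0 * n01 - P 0 1 * hd2 - P 1 0 * n00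
  have hs : P 1 1 = P 2 2 * P 0 0 := by
    linear_combination P 0 1 * n01 + P 0 0 * hd2 - P 1 1 * n00
  rw [hr, hs] at E01 E10 E11 E12
  -- Part 6: ε = 1.
  have hω : B' 0 1 - B' 1 0 = P 2 2 * (B 0 1 - B 1 0) := by
    linear_combination E01 - E10 + P 2 2 * (B 0 1 - B 1 0) * n00
  have hε : P 2 2 = 1 := by
    rcases mul_self_eq_one_iff.mp n22 with h | h
    · exact h
    · exfalso; rw [h] at hω; linarith [hB4, hB'4, hω]
  rw [hε] at E01 E10 E11 E12 hr hs
  -- Part 7: the 2x2 block is the identity.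
  have hpq : 2 * (P 0 0 * P 0 1) * (B 0 1 + B 1 0) = 0 := by
    linear_combination hB'3 + E11 - E00
  have hpq0 : P 0 0 * P 0 1 = 0 := by
    rcases mul_eq_zero.mp hpq with h | h
    · linarith
    · exact absurd h (by linarith)
  have hγ : B' 0 1 + B' 1 0 = (P 0 0 * P 0 0 - P 0 1 * P 0 1) * (B 0 1 + B 1 0) := by
    linear_combination E01 + E10
  have hppqq : 0 < P 0 0 * P 0 0 - P 0 1 * P 0 1 := by
    by_contra hcon
    push_neg at hcon
    have h5 : (P 0 0 * P 0 0 - P 0 1 * P 0 1) * (B 0 1 + B 1 0) ≤ 0 :=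
      mul_nonpos_iff.mpr (Or.inr ⟨hcon, hB5.le⟩)
    linarith [hγ, hB'5, h5]
  have hp2q2 : (P 0 0 * P 0 1) * (P 0 0 * P 0 1) = 0 := by rw [hpq0]; ring
  have hq4 : (P 0 1 * P 0 1) * (P 0 1 * P 0 1) = 0 := by
    have hle : P 0 1 * P 0 1 * (P 0 1 * P 0 1) ≤ P 0 0 * P 0 0 * (P 0 1 * P 0 1) :=
      mul_le_mul_of_nonneg_right (by linarith [hppqq]) (mul_self_nonneg _)
    refine le_antisymm ?_ (mul_nonneg (mul_self_nonneg _) (mul_self_nonneg _))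
    linarith [hle, hp2q2]
  have hq0 : P 0 1 = 0 := mul_self_eq_zero.mp (mul_self_eq_zero.mp hq4)
  have hr0 : P 1 0 = 0 := by rw [hr, hq0]; ring
  have hpp : P 0 0 * P 0 0 = 1 := by
    rw [hq0] at n00; linarith
  have hp1 : P 0 0 = 1 := by
    rcases mul_self_eq_one_iff.mp hpp with h | h
    · exact h
    · exfalso
      rw [hq0, h] at E12
      linarith [hB6, hB'6, E12]
  have hs1 : P 1 1 = 1 := by rw [hs, hp1]; ring
  -- Part 8: conclude.
  have hP1 : P = 1 := by
    ext i j
    fin_cases i <;> fin_cases j <;>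
      simp [Matrix.one_apply, hp1, hq0, h02, hr0, hs1, h12, hu0, hu1, hε]
  rw [hB'P, hP1, Matrix.transpose_one, Matrix.one_mul, Matrix.mul_one]
end

section
/- Every real 3-by-3 matrix A can be written as A = N + D where N and D are real 3-by-3 matrices, N is normal (N Nᵀ = Nᵀ N) and D is nilpotent (D³ = 0). This is the real normal-nilpotent decomposition (NND). -/
/-- A strictly upper triangular `3 × 3` real matrix cubes to zero. -/
lemma strictly_upper_cube_eq_zero (D : Matrix (Fin 3) (Fin 3) ℝ)
    (h : ∀ i j, j ≤ i → D i j = 0) : D ^ 3 = 0 := by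
  ext i k
  rw [pow_succ, pow_two]
  simp only [Matrix.mul_apply, Matrix.zero_apply]
  refine Finset.sum_eq_zero fun l _ => ?_
  rw [Finset.sum_mul]
  refine Finset.sum_eq_zero fun j _ => ?_
  by_cases hij : j ≤ i
  · simp [h i j hij]
  by_cases hjl : l ≤ j
  · simp [h j l hjl]
  by_cases hlk : k ≤ l
  · simp [h l k hlk]
  exfalso
  simp only [not_le, Fin.lt_def] at hij hjl hlk
  have hk := k.isLt
  omega

open Matrix in
/-- Real normal-nilpotent decomposition (NND): every real `3 × 3` matrix is the sum of a
real normal matrix and a real nilpotent matrix. -/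
theorem real_normal_nilpotent_decomposition (A : Matrix (Fin 3) (Fin 3) ℝ) :
    ∃ N D : Matrix (Fin 3) (Fin 3) ℝ,
      A = N + D ∧ N * Nᵀ = Nᵀ * N ∧ D ^ 3 = 0 := by
  refine ⟨Matrix.of fun i j => if j ≤ i then A i j else A j i,
    Matrix.of fun i j => if j ≤ i then 0 else A i j - A j i, ?_, ?_, ?_⟩
  · ext i j
    by_cases h : j ≤ i <;> simp [h]
  · have hsymm : (Matrix.of fun i j : Fin 3 => if j ≤ i then A i j else A j i)ᵀ
        = (Matrix.of fun i j : Fin 3 => if j ≤ i then A i j else A j i) := by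
      ext i j
      rcases lt_trichotomy i j with h | h | h
      · simp [Matrix.transpose_apply, h.le, h.not_ge, not_le.mpr h]
      · subst h; simp
      · simp [Matrix.transpose_apply, h.le, h.not_ge, not_le.mpr h]
    rw [hsymm]
  · exact strictly_upper_cube_eq_zero _ fun i j hji => by simp [hji]
end

section
/- Let χ, ω₃, γ, α, β, λ be real numbers, ψ = (ω₃ − γ)/2, and define Â = [[χ, (γ+ω₃)/2, −β], [(γ−ω₃)/2, χ, α], [0, 0, λ]], N = [[χ, ψ, 0], [−ψ, χ, 0], [0, 0, λ]], Γ = [[0, γ, −β], [0, 0, α], [0, 0, 0]]. Then Â = N + Γ, N is normal (N Nᵀ = Nᵀ N), and Γ is nilpotent (Γ³ = 0). This is the quasiorthogonal–nilpotent decomposition minimizing the normal part. -/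
open Matrix in
/-- Quasiorthogonal–nilpotent decomposition minimizing the normal part: the special real
Schur form splits as the sum of a normal (quasiorthogonal) matrix and a nilpotent one. -/
theorem quasiorthogonal_nilpotent_decomposition_min
    (χ ω₃ γ α β lam ψ : ℝ) (hψ : ψ = (ω₃ - γ) / 2) :
    !![χ, (γ + ω₃) / 2, -β; (γ - ω₃) / 2, χ, α; 0, 0, lam] =
      !![χ, ψ, 0; -ψ, χ, 0; 0, 0, lam] + !![0, γ, -β; 0, 0, α; 0, 0, 0] ∧
    !![χ, ψ, 0; -ψ, χ, 0; 0, 0, lam] * (!![χ, ψ, 0; -ψ, χ, 0; 0, 0, lam])ᵀ =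
      (!![χ, ψ, 0; -ψ, χ, 0; 0, 0, lam])ᵀ * !![χ, ψ, 0; -ψ, χ, 0; 0, 0, lam] ∧
    (!![(0 : ℝ), γ, -β; 0, 0, α; 0, 0, 0]) ^ 3 = 0 := by
  subst hψ
  refine ⟨?_, ?_, ?_⟩ <;>
    ext i j <;> fin_cases i <;> fin_cases j <;>
      simp [Matrix.mul_apply, Fin.sum_univ_succ, pow_succ, Matrix.transpose, Matrix.vecHead, Matrix.vecTail] <;> ring
end

section
/- Let α, β, γ be real numbers with α β γ ≠ 0. Then the matrix M = [[0, γ, 0], [0, 0, α], [β, 0, 0]] has determinant α β γ ≠ 0 and is not nilpotent. In particular, a 'purely asymmetric tensor' in the sense of the triple decomposition of motion (a matrix whose pairs of opposite off-diagonal entries have vanishing products) need not be nilpotent, so the triple decomposition of motion is not a normal-nilpotent decomposition. -/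
open Matrix in
/-- A purely asymmetric tensor need not be nilpotent: if `α β γ ≠ 0`, the purely
asymmetric matrix `[[0, γ, 0], [0, 0, α], [β, 0, 0]]` has nonzero determinant `α β γ`
and is not nilpotent. -/
theorem purely_asymmetric_not_nilpotent (α β γ : ℝ) (h : α * β * γ ≠ 0) :
    (!![0, γ, 0; 0, 0, α; β, 0, 0]).det = α * β * γ ∧
    (!![0, γ, 0; 0, 0, α; β, 0, 0]).det ≠ 0 ∧
    ¬ IsNilpotent !![0, γ, 0; 0, 0, α; β, 0, 0] := by
  have hdet : (!![0, γ, 0; 0, 0, α; β, 0, 0]).det = α * β * γ := by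
    simp [Matrix.det_fin_three]; ring
  refine ⟨hdet, hdet ▸ h, fun hn => ?_⟩
  obtain ⟨n, hMn⟩ := hn
  have hd : (α * β * γ) ^ n = 0 := by
    rw [← hdet, ← Matrix.det_pow, hMn, Matrix.det_zero]
  exact h (pow_eq_zero_iff'.mp hd).1
end

section
/- Let λ_cr, λ_ci be real numbers with λ_ci ≠ 0 and let c be a nonzero complex number. Define the complex 2-by-2 matrices Λ = diag(λ_cr + i·λ_ci, λ_cr − i·λ_ci) and Δ = [[0, c], [0, 0]]. Then there is no 2-by-2 unitary matrix U such that both U Λ U† and U Δ U† have all entries real. Consequently, the complex normal-nilpotent decomposition of a matrix with complex conjugate eigenvalues and nonvanishing coupling entry cannot be converted into a real normal-nilpotent decomposition by a unitary transformation. -/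
open Matrix in
/-- Gap between complex and real NNDs: for a diagonal matrix `Λ` with non-real complex
conjugate eigenvalues `λcr ± i λci` and a nonzero strictly upper triangular `Δ`, no
unitary transformation makes both `U Λ Uᴴ` and `U Δ Uᴴ` real simultaneously. -/
theorem complex_nnd_not_unitarily_real (lcr lci : ℝ) (hci : lci ≠ 0) (c : ℂ) (hc : c ≠ 0) :
    ¬ ∃ U : Matrix (Fin 2) (Fin 2) ℂ,
        U * Uᴴ = 1 ∧ Uᴴ * U = 1 ∧
        (∀ i j : Fin 2,
          ((U * !![(lcr : ℂ) + lci * Complex.I, 0; 0, (lcr : ℂ) - lci * Complex.I] * Uᴴ)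
            i j).im = 0) ∧
        (∀ i j : Fin 2, ((U * !![0, c; 0, 0] * Uᴴ) i j).im = 0) := by
  rintro ⟨U, hU1, hU2, hA, hB⟩
  set L : Matrix (Fin 2) (Fin 2) ℂ :=
    !![(lcr : ℂ) + lci * Complex.I, 0; 0, (lcr : ℂ) - lci * Complex.I] with hL
  set D : Matrix (Fin 2) (Fin 2) ℂ := !![0, c; 0, 0] with hD
  set A : Matrix (Fin 2) (Fin 2) ℂ := U * L * Uᴴ with hAdef
  set B : Matrix (Fin 2) (Fin 2) ℂ := U * D * Uᴴ with hBdef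
  have h3 : L * D - D * L = ((2 * lci * Complex.I : ℂ)) • D := by
    ext i j
    fin_cases i <;> fin_cases j <;>
      simp [hL, hD, Matrix.mul_apply, Fin.sum_univ_two, Matrix.smul_apply] <;> ring
  have hAB : A * B = U * (L * D) * Uᴴ := by
    simp only [hAdef, hBdef, Matrix.mul_assoc]
    rw [show Uᴴ * (U * (D * Uᴴ)) = D * Uᴴ from by rw [← Matrix.mul_assoc, hU2, Matrix.one_mul]]
  have hBA : B * A = U * (D * L) * Uᴴ := by
    simp only [hAdef, hBdef, Matrix.mul_assoc]
    rw [show Uᴴ * (U * (L * Uᴴ)) = L * Uᴴ from by rw [← Matrix.mul_assoc, hU2, Matrix.one_mul]]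
  have hcomm : A * B - B * A = ((2 * lci * Complex.I : ℂ)) • B := by
    rw [hAB, hBA, ← Matrix.sub_mul, ← Matrix.mul_sub, h3, hBdef,
      Matrix.mul_smul, Matrix.smul_mul]
  have hB0 : B = 0 := by
    ext i j
    have h := congrArg (fun M => (M i j).im) hcomm
    simp only [Matrix.sub_apply, Matrix.mul_apply, Fin.sum_univ_two, Matrix.smul_apply,
      Complex.sub_im, Complex.add_im, Complex.mul_im, smul_eq_mul] at h
    have hA00 := hA i 0; have hA01 := hA i 1
    have hA0j := hA 0 j; have hA1j := hA 1 j
    have hB0j := hB 0 j; have hB1j := hB 1 j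
    have hBi0 := hB i 0; have hBi1 := hB i 1
    have hBij := hB i j
    rw [hA00, hA01, hA0j, hA1j, hB0j, hB1j, hBi0, hBi1] at h
    have him : (B i j).im = 0 := hBij
    have hre : (B i j).re = 0 := by
      simp [Complex.mul_im, Complex.mul_re, him] at h
      rcases h with h | h
      · exact absurd h hci
      · exact h
    simp [Matrix.zero_apply]
    exact Complex.ext hre him
  have hDD : D = Uᴴ * B * U := by
    rw [hBdef]
    simp only [Matrix.mul_assoc]
    rw [hU2, Matrix.mul_one, ← Matrix.mul_assoc, hU2, Matrix.one_mul]
  have : D 0 1 = 0 := by rw [hDD, hB0]; simp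
  rw [hD] at this
  simp at this
  exact hc this
end
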